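/- For all integers k ≥ 3 and n ≥ 2, and any index i with 1 ≤ i ≤ n, the divisor (k−1)·ε_i on the hinge graph H_{k,n} is linearly equivalent to the divisor δ; that is, (k−1)·ε_i − δ lies in Prin(H_{k,n}). -/

import Mathlib

/-- Vertex set of the hinge graph `H_{k,n}`: two shared vertices `u, w`
(encoded as `Sum.inl 0`, `Sum.inl 1`) together with the vertices
`v_{i,j}` (encoded as `Sum.inr (i, j)`, zero-indexed). -/
abbrev HingeVertex (k n : ℕ) : Type := Fin 2 ⊕ (Fin n × Fin (k - 2))

/-- The shared vertex `u`. -/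
def hu (k n : ℕ) : HingeVertex k n := Sum.inl 0

/-- The shared vertex `w`. -/
def hw (k n : ℕ) : HingeVertex k n := Sum.inl 1

/-- The vertex `v_{i+1,j+1}` of the `i+1`-st cycle (zero-indexed here). -/
def hv (k n : ℕ) (i : Fin n) (j : Fin (k - 2)) : HingeVertex k n := Sum.inr (i, j)

/-- The base (Boolean) edge relation of the hinge graph: `u-w`, `u-v_{i,1}`,
`v_{i,j}-v_{i,j+1}`, `v_{i,k-2}-w`. -/
def hingeRelB (k n : ℕ) : HingeVertex k n → HingeVertex k n → Bool
  | Sum.inl a, Sum.inl b => a != b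
  | Sum.inl a, Sum.inr p => a == 0 && p.2.val == 0
  | Sum.inr p, Sum.inl b => b == 1 && p.2.val == k - 3
  | Sum.inr p, Sum.inr q => p.1 == q.1 && q.2.val == p.2.val + 1

/-- The hinge graph `H_{k,n}`: `n` cycles of length `k` glued along the edge `{u, w}`. -/
def Hinge (k n : ℕ) : SimpleGraph (HingeVertex k n) :=
  SimpleGraph.fromRel (fun x y => hingeRelB k n x y = true)

instance (k n : ℕ) : DecidableRel (Hinge k n).Adj := fun x y =>
  inferInstanceAs (Decidable (x ≠ y ∧ (hingeRelB k n x y = true ∨ hingeRelB k n y x = true)))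

/-- The number of spanning trees of a graph `G`: the number of edge sets `s ⊆ E(G)`
whose associated spanning subgraph (on all of `V`) is connected and acyclic. -/
noncomputable def spanningTreeCount {V : Type*} (G : SimpleGraph V) : ℕ :=
  Set.ncard {s : Set (Sym2 V) | s ⊆ G.edgeSet ∧ (SimpleGraph.fromEdgeSet s).IsTree}

/-- The degree homomorphism on divisors. -/
def degHom (V : Type*) [Fintype V] : (V → ℤ) →+ ℤ where
  toFun D := ∑ v, D v
  map_zero' := by simp
  map_add' x y := by simp [Finset.sum_add_distrib]

/-- The group `Div⁰` of degree-zero divisors. -/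
def Div0 (V : Type*) [Fintype V] : AddSubgroup (V → ℤ) := (degHom V).ker

/-- The group of principal divisors: the image of the Laplacian `L = Deg - A`. -/
def Prin {V : Type*} [Fintype V] [DecidableEq V] (G : SimpleGraph V) [DecidableRel G.Adj] :
    AddSubgroup (V → ℤ) :=
  AddMonoidHom.range (Matrix.mulVecLin (G.lapMatrix ℤ)).toAddMonoidHom

/-- The critical group `K(G) = Div⁰(G) / Prin(G)`. -/
def CriticalGroup {V : Type*} [Fintype V] [DecidableEq V] (G : SimpleGraph V)
    [DecidableRel G.Adj] : Type _ :=
  Div0 V ⧸ ((Prin G).addSubgroupOf (Div0 V))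

noncomputable instance {V : Type*} [Fintype V] [DecidableEq V] (G : SimpleGraph V)
    [DecidableRel G.Adj] : AddCommGroup (CriticalGroup G) :=
  inferInstanceAs (AddCommGroup (Div0 V ⧸ ((Prin G).addSubgroupOf (Div0 V))))

/-- The class of a degree-zero divisor in the critical group. -/
def divisorClass {V : Type*} [Fintype V] [DecidableEq V] (G : SimpleGraph V)
    [DecidableRel G.Adj] (D : V → ℤ) (hD : D ∈ Div0 V) : CriticalGroup G :=
  (QuotientAddGroup.mk (⟨D, hD⟩ : Div0 V) :
    Div0 V ⧸ ((Prin G).addSubgroupOf (Div0 V)))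

/-- The divisor with value `1` at `x`, `-1` at `y` (for `x ≠ y`) and `0` elsewhere. -/
def pointDiff {V : Type*} [DecidableEq V] (x y : V) : V → ℤ :=
  fun z => (if z = x then 1 else 0) - (if z = y then 1 else 0)

lemma pointDiff_mem {V : Type*} [Fintype V] [DecidableEq V] (x y : V) :
    pointDiff x y ∈ Div0 V := by
  simp [Div0, AddMonoidHom.mem_ker, degHom, pointDiff, Finset.sum_sub_distrib]

/-!
Let `x` vanish at `u`, `w` and on every cycle other than the `i`-th, and take the value
`t + 1 - k` at the paper's vertex `v_{i,t}`. Along the path `u, v_{i,1}, …, v_{i,k-2}, w` this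
potential is affine except for a kink at `u`, so its Laplacian vanishes at `v_{i,t}` for
`t ≥ 2` and equals `1 - k` at `v_{i,1}`, `k - 2` at `u` and `1` at `w`: this is `(k-1)ε_i - δ`.
-/

open Finset Matrix

theorem SimpleGraph.lapMatrix_mulVec_apply_eq_sum_sub {V R : Type*} [Fintype V] [DecidableEq V]
    (G : SimpleGraph V) [DecidableRel G.Adj] [NonAssocRing R] (x : V → R) (v : V) :
    (G.lapMatrix R *ᵥ x) v = ∑ u ∈ G.neighborFinset v, (x v - x u) := by
  rw [SimpleGraph.lapMatrix_mulVec_apply, sum_sub_distrib, sum_const,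
    SimpleGraph.card_neighborFinset_eq_degree, nsmul_eq_mul]

section Hinge

variable {k n : ℕ}

theorem hingeVertex_cases (z : HingeVertex k n) :
    z = hu k n ∨ z = hw k n ∨ ∃ m j, z = hv k n m j := by
  rcases z with a | ⟨m, j⟩
  · fin_cases a
    exacts [Or.inl rfl, Or.inr (Or.inl rfl)]
  · exact Or.inr (Or.inr ⟨m, j, rfl⟩)

theorem hinge_adj_hu_hw : (Hinge k n).Adj (hu k n) (hw k n) := by
  simp [Hinge, hingeRelB, hu, hw]

theorem hinge_adj_hu_hv {m : Fin n} {j : Fin (k - 2)} :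
    (Hinge k n).Adj (hu k n) (hv k n m j) ↔ j.val = 0 := by
  simp [Hinge, hingeRelB, hu, hv]

theorem hinge_adj_hw_hv {m : Fin n} {j : Fin (k - 2)} :
    (Hinge k n).Adj (hw k n) (hv k n m j) ↔ j.val = k - 3 := by
  simp [Hinge, hingeRelB, hw, hv]

theorem hinge_adj_hv_hv {m m' : Fin n} {j j' : Fin (k - 2)} :
    (Hinge k n).Adj (hv k n m j) (hv k n m' j') ↔
      m = m' ∧ (j'.val = j.val + 1 ∨ j.val = j'.val + 1) := by
  simp only [Hinge, SimpleGraph.fromRel_adj, hingeRelB, hv, ne_eq, Sum.inr.injEq,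
    Prod.ext_iff, Fin.ext_iff, Bool.and_eq_true, beq_iff_eq]
  omega

theorem hinge_neighborFinset_hu (hk : 0 < k - 2) :
    (Hinge k n).neighborFinset (hu k n) =
      insert (hw k n) (univ.image fun m => hv k n m ⟨0, hk⟩) := by
  ext z
  obtain rfl | rfl | ⟨m, j, rfl⟩ := hingeVertex_cases z <;>
    simp only [SimpleGraph.mem_neighborFinset, hinge_adj_hu_hw, hinge_adj_hu_hv, mem_insert,
      mem_image, mem_univ, true_and] <;>
    simp [hu, hw, hv, Fin.ext_iff, eq_comm]

theorem hinge_neighborFinset_hw (hk : 3 ≤ k) :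
    (Hinge k n).neighborFinset (hw k n) =
      insert (hu k n) (univ.image fun m => hv k n m ⟨k - 3, by omega⟩) := by
  ext z
  obtain rfl | rfl | ⟨m, j, rfl⟩ := hingeVertex_cases z <;>
    simp only [SimpleGraph.mem_neighborFinset, (Hinge k n).adj_comm _ (hu k n), hinge_adj_hu_hw,
      hinge_adj_hw_hv, mem_insert, mem_image, mem_univ, true_and] <;>
    simp [hu, hw, hv, Fin.ext_iff, eq_comm]

/-- The paper's `v_{i,t}` for `1 ≤ t ≤ k - 2` (whereas `hv` is zero-indexed), with `u` at
`t = 0` and `w` for `t ≥ k - 1`. -/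
def hingeCycleVertex (i : Fin n) (t : ℕ) : HingeVertex k n :=
  if t = 0 then hu k n else if h : t - 1 < k - 2 then hv k n i ⟨t - 1, h⟩ else hw k n

theorem hinge_neighborFinset_hv (m : Fin n) (j : Fin (k - 2)) :
    (Hinge k n).neighborFinset (hv k n m j) =
      {hingeCycleVertex m j, hingeCycleVertex m (j + 2)} := by
  ext z
  obtain rfl | rfl | ⟨m', j', rfl⟩ := hingeVertex_cases z <;>
    simp only [SimpleGraph.mem_neighborFinset, (Hinge k n).adj_comm _ (hu k n),
      (Hinge k n).adj_comm _ (hw k n), hinge_adj_hu_hv,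
      hinge_adj_hw_hv, hinge_adj_hv_hv, mem_insert, mem_singleton] <;>
    simp only [hingeCycleVertex, hu, hw, hv] <;> split_ifs <;> simp_all [Fin.ext_iff] <;> omega

def hingePotential (i : Fin n) : HingeVertex k n → ℤ :=
  Sum.elim 0 fun p => if p.1 = i then ((p.2 : ℕ) : ℤ) + 2 - k else 0

theorem hingePotential_hingeCycleVertex (i m : Fin n) {t : ℕ} (ht : t ≤ k - 1) :
    hingePotential i (hingeCycleVertex m t : HingeVertex k n) =
      if m = i ∧ t ≠ 0 then (t : ℤ) + 1 - k else 0 := by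
  simp only [hingeCycleVertex, hingePotential, hu, hw, hv]
  split_ifs <;> simp_all <;> omega

theorem lapMatrix_mulVec_hingePotential_hu (hk : 3 ≤ k) (i : Fin n) :
    ((Hinge k n).lapMatrix ℤ *ᵥ hingePotential i) (hu k n) = k - 2 := by
  rw [SimpleGraph.lapMatrix_mulVec_apply_eq_sum_sub, hinge_neighborFinset_hu (by omega), sum_insert,
    sum_image]
  · simp [hingePotential, hu, hw, hv]
  · exact fun a _ b _ h => by simpa [hv] using h
  · simp [hw, hv]

theorem lapMatrix_mulVec_hingePotential_hw (hk : 3 ≤ k) (i : Fin n) :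
    ((Hinge k n).lapMatrix ℤ *ᵥ hingePotential i) (hw k n) = 1 := by
  rw [SimpleGraph.lapMatrix_mulVec_apply_eq_sum_sub, hinge_neighborFinset_hw hk, sum_insert,
    sum_image]
  · simp only [hingePotential, hw, Fin.isValue, Sum.elim_inl, Pi.zero_apply, hu, sub_self, hv,
      Sum.elim_inr, zero_sub, sum_neg_distrib, sum_ite_eq', mem_univ, ↓reduceIte, neg_sub, zero_add]
    omega
  · exact fun a _ b _ h => by simpa [hv] using h
  · simp [hu, hv]

theorem lapMatrix_mulVec_hingePotential_hv (i m : Fin n) (j : Fin (k - 2)) :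
    ((Hinge k n).lapMatrix ℤ *ᵥ hingePotential i) (hv k n m j) =
      if m = i ∧ j.val = 0 then 1 - (k : ℤ) else 0 := by
  rw [SimpleGraph.lapMatrix_mulVec_apply_eq_sum_sub, hinge_neighborFinset_hv, sum_pair,
    hingePotential_hingeCycleVertex _ _ (by omega), hingePotential_hingeCycleVertex _ _ (by omega)]
  · simp only [hingePotential, hv, Sum.elim_inr]
    grind
  · unfold hingeCycleVertex
    split_ifs <;> simp [hu, hw, hv, Fin.ext_iff] <;> omega

end Hinge

/-- For all integers `k ≥ 3`, `n ≥ 2` and any index `i`, the divisor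
`(k-1) • ε_i - δ` is principal on `H_{k,n}`, i.e. `(k-1) • ε_i` is linearly equivalent
to `δ`. -/
theorem hinge_epsilon_linearEquiv_delta (k n : ℕ) (hk : 3 ≤ k) (i : Fin n) :
    (k - 1) • pointDiff (hu k n) (hv k n i ⟨0, by omega⟩) - pointDiff (hu k n) (hw k n) ∈
      Prin (Hinge k n) := by
  refine ⟨hingePotential i, funext fun v => ?_⟩
  change ((Hinge k n).lapMatrix ℤ *ᵥ hingePotential i) v = _
  have hk1 : ((k - 1 : ℕ) : ℤ) = k - 1 := by omega
  obtain rfl | rfl | ⟨m, j, rfl⟩ := hingeVertex_cases v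
  · rw [lapMatrix_mulVec_hingePotential_hu hk]
    simp only [hu, Fin.isValue, hv, nsmul_eq_mul, hw, Pi.sub_apply, Pi.mul_apply, Pi.natCast_apply,
      hk1, pointDiff, ↓reduceIte, reduceCtorEq, sub_zero, mul_one, Sum.inl.injEq, zero_ne_one]
    ring
  · rw [lapMatrix_mulVec_hingePotential_hw hk]
    simp [pointDiff, hu, hw, hv]
  · rw [lapMatrix_mulVec_hingePotential_hv]
    simp [pointDiff, hu, hw, hv, hk1, Fin.ext_iff, apply_ite Neg.neg]
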